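/- Let n = 2k−1 with k ≥ 2. For σ_1, σ_2 ∈ S_{n+1}, define f_σ as follows: with t = σ^{-1}(n+1), f_σ(X) = σ(X) if t ∉ X and f_σ(X) = ([n] \ σ(X \ {t})) if t ∈ X. Then f_{σ_1} ∘ f_{σ_2} = f_{σ_1 ∘ σ_2}, and hence Γ_{n+1} = {f_σ : σ ∈ S_{n+1}} is a subgroup of the automorphism group of H(2k−1,k) isomorphic to S_{n+1}. -/

import Mathlib

/-!
Identify `Fin (n + 1)` with `[n+1]`, a subset `X ⊆ [n]` with the subset of `[n+1]` avoiding the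
last point, and view it as a representative of the pair `{Z, Zᶜ}` of complementary subsets of
`[n+1]`. Then `f_σ` is `σ` acting on such pairs, followed by choosing the representative that
avoids the last point; since `σ` commutes with complementation this is an action of `S_{n+1}`.
When `n + 1 = 2k`, replacing `Z` by `Zᶜ` turns `|Z ∆ W| = k` into `|Z ∆ Wᶜ| = 2k - k = k`, so the
action preserves adjacency in `H(n, k)`. For `n ≥ 2` a singleton `{i}` is fixed by `f_σ` only
if `σ` fixes `i`, which makes the action faithful.
-/

open Finset symmDiff

/-- The graph `H(n,k)` on subsets of `[n]`: `X ~ Y` iff `|X ∆ Y| = k`. -/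
def HGraph (n k : ℕ) : SimpleGraph (Finset (Fin n)) where
  Adj X Y := (X ∆ Y).card = k ∧ X ≠ Y
  symm := by
    refine ⟨fun X Y h => ?_⟩
    exact ⟨by rw [symmDiff_comm]; exact h.1, h.2.symm⟩
  loopless := ⟨fun X h => h.2 rfl⟩

/-- For `σ ∈ S_{n+1}` with `t = σ⁻¹(n+1)`: `f_σ(X) = σ(X)` if `t ∉ X`, and
`f_σ(X) = [n] \ σ(X \ {t})` if `t ∈ X`.  (Subsets of `[n]` are `Finset (Fin n)`; the
set `[n+1]` is modelled by `Fin (n+1)` with `n+1` corresponding to `Fin.last n`, and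
`t ∈ X` is equivalent to `Fin.last n ∈ σ(X)`.) -/
def fperm (n : ℕ) (σ : Equiv.Perm (Fin (n + 1))) (X : Finset (Fin n)) : Finset (Fin n) :=
  let Y := X.image (fun i => σ (Fin.castSucc i))
  if Fin.last n ∈ Y then Finset.univ.filter (fun i => Fin.castSucc i ∉ Y)
  else Finset.univ.filter (fun i => Fin.castSucc i ∈ Y)

open scoped Pointwise

theorem symmDiff_compl_right_eq {α : Type*} [BooleanAlgebra α] (a b : α) :
    a ∆ bᶜ = (a ∆ b)ᶜ := by
  rw [compl_symmDiff, bihimp_eq', symmDiff_eq, compl_compl, inf_comm bᶜ]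

namespace Finset

theorem smul_finset_compl {G α : Type*} [Group G] [MulAction G α] [Fintype α]
    [DecidableEq α] (g : G) (s : Finset α) : g • sᶜ = (g • s)ᶜ := by
  rw [compl_eq_univ_sdiff, smul_finset_sdiff, smul_finset_univ, compl_eq_univ_sdiff]

theorem card_symmDiff_compl_of_card_eq_two_mul {α : Type*} [Fintype α] [DecidableEq α]
    {k : ℕ} (hα : Fintype.card α = 2 * k) {s t : Finset α} (h : #(s ∆ t) = k) :
    #(s ∆ tᶜ) = k := by
  rw [symmDiff_compl_right_eq, card_compl, h]
  omega

end Finset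

section LastAvoiding

variable {n : ℕ}

def castSuccFinset (X : Finset (Fin n)) : Finset (Fin (n + 1)) := X.map Fin.castSuccEmb

def castSuccPreimage (Z : Finset (Fin (n + 1))) : Finset (Fin n) :=
  univ.filter fun i => Fin.castSucc i ∈ Z

@[simp]
theorem castSucc_mem_castSuccFinset {X : Finset (Fin n)} {i : Fin n} :
    Fin.castSucc i ∈ castSuccFinset X ↔ i ∈ X := by
  simp [castSuccFinset]

theorem last_notMem_castSuccFinset (X : Finset (Fin n)) : Fin.last n ∉ castSuccFinset X := by
  simp [castSuccFinset, Fin.castSucc_ne_last]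

@[simp]
theorem mem_castSuccPreimage {Z : Finset (Fin (n + 1))} {i : Fin n} :
    i ∈ castSuccPreimage Z ↔ Fin.castSucc i ∈ Z := by
  simp [castSuccPreimage]

@[simp]
theorem castSuccPreimage_castSuccFinset (X : Finset (Fin n)) :
    castSuccPreimage (castSuccFinset X) = X := by
  ext i; simp

theorem castSuccFinset_castSuccPreimage {Z : Finset (Fin (n + 1))} (h : Fin.last n ∉ Z) :
    castSuccFinset (castSuccPreimage Z) = Z := by
  ext j
  induction j using Fin.lastCases with
  | last => simpa [last_notMem_castSuccFinset] using h
  | cast i => simp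

theorem castSuccPreimage_symmDiff (Z W : Finset (Fin (n + 1))) :
    castSuccPreimage (Z ∆ W) = castSuccPreimage Z ∆ castSuccPreimage W := by
  ext i; simp [mem_symmDiff]

theorem card_castSuccPreimage {Z : Finset (Fin (n + 1))} (h : Fin.last n ∉ Z) :
    #(castSuccPreimage Z) = #Z := by
  conv_rhs => rw [← castSuccFinset_castSuccPreimage h]
  exact (card_map _).symm

def avoidLast (Z : Finset (Fin (n + 1))) : Finset (Fin (n + 1)) :=
  if Fin.last n ∈ Z then Zᶜ else Z

theorem last_notMem_avoidLast (Z : Finset (Fin (n + 1))) : Fin.last n ∉ avoidLast Z := by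
  unfold avoidLast; split_ifs <;> simp_all

theorem avoidLast_eq_or (Z : Finset (Fin (n + 1))) : avoidLast Z = Z ∨ avoidLast Z = Zᶜ := by
  unfold avoidLast; split_ifs <;> simp

theorem avoidLast_of_notMem {Z : Finset (Fin (n + 1))} (h : Fin.last n ∉ Z) :
    avoidLast Z = Z := if_neg h

theorem avoidLast_compl (Z : Finset (Fin (n + 1))) : avoidLast Zᶜ = avoidLast Z := by
  unfold avoidLast; by_cases h : Fin.last n ∈ Z <;> simp [h]

theorem avoidLast_smul_avoidLast (σ : Equiv.Perm (Fin (n + 1))) (Z : Finset (Fin (n + 1))) :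
    avoidLast (σ • avoidLast Z) = avoidLast (σ • Z) := by
  rcases avoidLast_eq_or Z with h | h <;> rw [h]
  rw [smul_finset_compl, avoidLast_compl]

theorem card_avoidLast_symmDiff {k : ℕ} (hnk : n + 1 = 2 * k) {Z W : Finset (Fin (n + 1))}
    (h : #(Z ∆ W) = k) : #(avoidLast Z ∆ avoidLast W) = k := by
  have hcard : Fintype.card (Fin (n + 1)) = 2 * k := by rw [Fintype.card_fin, hnk]
  rcases avoidLast_eq_or Z with hZ | hZ <;> rcases avoidLast_eq_or W with hW | hW <;>
    rw [hZ, hW]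
  · exact h
  · exact card_symmDiff_compl_of_card_eq_two_mul hcard h
  · rw [symmDiff_comm] at h ⊢; exact card_symmDiff_compl_of_card_eq_two_mul hcard h
  · rwa [compl_symmDiff_compl]

end LastAvoiding

section Fperm

variable {n : ℕ}

theorem fperm_eq_castSuccPreimage (σ : Equiv.Perm (Fin (n + 1))) (X : Finset (Fin n)) :
    fperm n σ X = castSuccPreimage (avoidLast (σ • castSuccFinset X)) := by
  have hY : X.image (fun i => σ (Fin.castSucc i)) = σ • castSuccFinset X := by
    rw [smul_finset_def, castSuccFinset, map_eq_image, image_image]; rfl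
  unfold fperm avoidLast castSuccPreimage
  rw [hY]
  by_cases h : Fin.last n ∈ σ • castSuccFinset X <;> simp [h]

theorem fperm_mul (σ τ : Equiv.Perm (Fin (n + 1))) (X : Finset (Fin n)) :
    fperm n σ (fperm n τ X) = fperm n (σ * τ) X := by
  simp only [fperm_eq_castSuccPreimage, castSuccFinset_castSuccPreimage (last_notMem_avoidLast _),
    avoidLast_smul_avoidLast, mul_smul]

theorem fperm_one (X : Finset (Fin n)) : fperm n 1 X = X := by
  rw [fperm_eq_castSuccPreimage, one_smul, avoidLast_of_notMem (last_notMem_castSuccFinset X),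
    castSuccPreimage_castSuccFinset]

def fpermEquiv (σ : Equiv.Perm (Fin (n + 1))) : Finset (Fin n) ≃ Finset (Fin n) where
  toFun := fperm n σ
  invFun := fperm n σ⁻¹
  left_inv X := by rw [fperm_mul, inv_mul_cancel, fperm_one]
  right_inv X := by rw [fperm_mul, mul_inv_cancel, fperm_one]

theorem card_fperm_symmDiff {k : ℕ} (hnk : n + 1 = 2 * k) (σ : Equiv.Perm (Fin (n + 1)))
    {X Y : Finset (Fin n)} (h : #(X ∆ Y) = k) : #(fperm n σ X ∆ fperm n σ Y) = k := by
  have hsmul : #((σ • castSuccFinset X) ∆ (σ • castSuccFinset Y)) = k := by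
    rw [← smul_finset_symmDiff, card_smul_finset, castSuccFinset, castSuccFinset,
      map_eq_image, map_eq_image, ← image_symmDiff _ _ Fin.castSuccEmb.injective,
      card_image_of_injective _ Fin.castSuccEmb.injective, h]
  have hlast :
      Fin.last n ∉ avoidLast (σ • castSuccFinset X) ∆ avoidLast (σ • castSuccFinset Y) := by
    simp [mem_symmDiff, last_notMem_avoidLast]
  rw [fperm_eq_castSuccPreimage, fperm_eq_castSuccPreimage, ← castSuccPreimage_symmDiff,
    card_castSuccPreimage hlast, card_avoidLast_symmDiff hnk hsmul]

theorem card_fperm_symmDiff_iff {k : ℕ} (hnk : n + 1 = 2 * k) (σ : Equiv.Perm (Fin (n + 1)))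
    {X Y : Finset (Fin n)} : #(fperm n σ X ∆ fperm n σ Y) = k ↔ #(X ∆ Y) = k := by
  refine ⟨fun h => ?_, card_fperm_symmDiff hnk σ⟩
  simpa only [fperm_mul, inv_mul_cancel, fperm_one] using card_fperm_symmDiff hnk σ⁻¹ h

def fpermIso {k : ℕ} (hnk : n + 1 = 2 * k) (σ : Equiv.Perm (Fin (n + 1))) :
    HGraph n k ≃g HGraph n k where
  toEquiv := fpermEquiv σ
  map_rel_iff' :=
    and_congr (card_fperm_symmDiff_iff hnk σ) (fpermEquiv σ).injective.ne_iff

def fpermHom {k : ℕ} (hnk : n + 1 = 2 * k) :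
    Equiv.Perm (Fin (n + 1)) →* (HGraph n k ≃g HGraph n k) where
  toFun := fpermIso hnk
  map_one' := RelIso.ext fperm_one
  map_mul' σ τ := RelIso.ext fun X => (fperm_mul σ τ X).symm

theorem eq_one_of_forall_fperm_eq (hn : 2 ≤ n) {σ : Equiv.Perm (Fin (n + 1))}
    (hσ : ∀ X, fperm n σ X = X) : σ = 1 := by
  have hfix : ∀ i : Fin n, σ (Fin.castSucc i) = Fin.castSucc i := by
    intro i
    have h := congrArg castSuccFinset (hσ {i})
    rw [fperm_eq_castSuccPreimage, castSuccFinset_castSuccPreimage (last_notMem_avoidLast _)] at h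
    simp only [castSuccFinset, map_singleton, Fin.castSuccEmb_apply, smul_finset_singleton,
      Equiv.Perm.smul_def] at h
    rcases avoidLast_eq_or {σ (Fin.castSucc i)} with h' | h' <;> rw [h'] at h
    · exact singleton_injective h
    · have := congrArg card h
      simp only [card_compl, Fintype.card_fin, card_singleton, add_tsub_cancel_right] at this
      omega
  rw [← Equiv.Perm.support_eq_empty_iff]
  have hsupp : σ.support ⊆ {Fin.last n} := by
    intro j hj
    induction j using Fin.lastCases with
    | last => exact mem_singleton_self _
    | cast i => exact absurd (hfix i) (Equiv.Perm.mem_support.mp hj)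
  rcases subset_singleton_iff.mp hsupp with h | h
  · exact h
  · exact absurd (congrArg card h) σ.card_support_ne_one

theorem fpermHom_injective {k : ℕ} (hn : 2 ≤ n) (hnk : n + 1 = 2 * k) :
    Function.Injective (fpermHom hnk) :=
  (injective_iff_map_eq_one _).mpr fun _ hσ =>
    eq_one_of_forall_fperm_eq hn fun X => DFunLike.congr_fun hσ X

end Fperm

/-- For `n = 2k - 1`, `k ≥ 2`: `f_{σ₁} ∘ f_{σ₂} = f_{σ₁ ∘ σ₂}`, and hence
`Γ_{n+1} = {f_σ : σ ∈ S_{n+1}}` is a subgroup of `Aut(H(2k-1,k))` isomorphic to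
`S_{n+1}` (an injective group homomorphism `S_{n+1} →* Aut(H(2k-1,k))` whose image
consists exactly of the maps `f_σ`). -/
theorem stmt_4 (k n : ℕ) (hk : 2 ≤ k) (hn : n = 2 * k - 1) :
    (∀ (σ₁ σ₂ : Equiv.Perm (Fin (n + 1))) (X : Finset (Fin n)),
      fperm n σ₁ (fperm n σ₂ X) = fperm n (σ₁ * σ₂) X) ∧
    (∃ φ : Equiv.Perm (Fin (n + 1)) →* (HGraph n k ≃g HGraph n k),
      Function.Injective φ ∧ ∀ (σ : Equiv.Perm (Fin (n + 1))) (X : Finset (Fin n)),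
        (φ σ) X = fperm n σ X) := by
  have hnk : n + 1 = 2 * k := by omega
  exact ⟨fperm_mul, fpermHom hnk, fpermHom_injective (by omega) hnk, fun _ _ => rfl⟩
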